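/- Let a unit square (arbitrary orientation) have its center at a point of a rectangular table whose sides both have length at least √2. Cut the square by the horizontal and vertical lines through its center into four pieces of area 1/4 each. Then at least one of these four pieces is entirely contained in the table. -/

import Mathlib

open Real MeasureTheory

/-- The unit square centered at `c`, rotated by `θ`. -/
def unitSquare (c : ℝ × ℝ) (θ : ℝ) : Set (ℝ × ℝ) :=
  {p | |Real.cos θ * (p.1 - c.1) + Real.sin θ * (p.2 - c.2)| ≤ 1 / 2 ∧
       |(-Real.sin θ) * (p.1 - c.1) + Real.cos θ * (p.2 - c.2)| ≤ 1 / 2}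

/-!
Every point of the unit square lies within `√2 / 2` of its center in each coordinate, since
that coordinate is a combination `c x - s y` of the square's own coordinates `|x|, |y| ≤ 1/2`
with `c² + s² = 1`. As `a, b ≥ √2`, in each axis the center is at distance at least `√2 / 2`
from one of the two sides of the table; the quadrant pointing towards those two sides works.
-/

lemma abs_mul_sub_mul_le_sqrt_two_mul {c s x y r : ℝ} (hcs : c ^ 2 + s ^ 2 = 1)
    (hx : |x| ≤ r) (hy : |y| ≤ r) : |c * x - s * y| ≤ √2 * r := by
  have hsqrt : √2 ^ 2 = 2 := Real.sq_sqrt zero_le_two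
  have habs : |c| + |s| ≤ √2 := by
    nlinarith [abs_nonneg c, abs_nonneg s, sq_abs c, sq_abs s, sq_nonneg (|c| - |s|),
      Real.sqrt_nonneg 2]
  calc |c * x - s * y| ≤ |c| * |x| + |s| * |y| := by
        simpa only [abs_mul] using abs_sub (c * x) (s * y)
    _ ≤ |c| * r + |s| * r := by gcongr
    _ = (|c| + |s|) * r := by ring
    _ ≤ √2 * r := by gcongr; exact (abs_nonneg x).trans hx

lemma abs_fst_sub_le_of_mem_unitSquare {c q : ℝ × ℝ} {θ : ℝ} (hq : q ∈ unitSquare c θ) :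
    |q.1 - c.1| ≤ √2 / 2 := by
  have hid : q.1 - c.1 = cos θ * (cos θ * (q.1 - c.1) + sin θ * (q.2 - c.2)) -
      sin θ * (-sin θ * (q.1 - c.1) + cos θ * (q.2 - c.2)) := by
    linear_combination (-(q.1 - c.1)) * cos_sq_add_sin_sq θ
  rw [hid, ← mul_one_div]
  exact abs_mul_sub_mul_le_sqrt_two_mul (cos_sq_add_sin_sq θ) hq.1 hq.2

lemma abs_snd_sub_le_of_mem_unitSquare {c q : ℝ × ℝ} {θ : ℝ} (hq : q ∈ unitSquare c θ) :
    |q.2 - c.2| ≤ √2 / 2 := by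
  have hid : q.2 - c.2 = cos θ * (-sin θ * (q.1 - c.1) + cos θ * (q.2 - c.2)) -
      (-sin θ) * (cos θ * (q.1 - c.1) + sin θ * (q.2 - c.2)) := by
    linear_combination (-(q.2 - c.2)) * cos_sq_add_sin_sq θ
  rw [hid, ← mul_one_div]
  exact abs_mul_sub_mul_le_sqrt_two_mul (by linear_combination cos_sq_add_sin_sq θ) hq.2 hq.1

lemma exists_sign_halfInterval_subset_Icc {L c r : ℝ} (hL : 2 * r ≤ L) (hc : c ∈ Set.Icc 0 L) :
    ∃ ε : ℝ, (ε = 1 ∨ ε = -1) ∧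
      ∀ t : ℝ, |t - c| ≤ r → 0 ≤ ε * (t - c) → t ∈ Set.Icc 0 L := by
  rcases le_or_gt c (L - r) with h | h
  · refine ⟨1, Or.inl rfl, fun t ht hε => ?_⟩
    have := abs_le.1 ht
    constructor <;> linarith [hc.1]
  · refine ⟨-1, Or.inr rfl, fun t ht hε => ?_⟩
    have := abs_le.1 ht
    constructor <;> linarith [hc.2]

/-- Let a unit square with arbitrary orientation be centered at a point `p` of a table
`T = [0,a] × [0,b]` with `a, b ≥ √2`.  Cut the square by the axis-parallel cross through
`p` into four pieces.  Then at least one of the four pieces is entirely contained in the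
table. -/
theorem some_quarter_piece_in_table (a b : ℝ)
    (ha : Real.sqrt 2 ≤ a) (hb : Real.sqrt 2 ≤ b)
    (p : ℝ × ℝ) (hp : p ∈ Set.Icc (0 : ℝ) a ×ˢ Set.Icc (0 : ℝ) b) (θ : ℝ) :
    ∃ ε δ : ℝ, (ε = 1 ∨ ε = -1) ∧ (δ = 1 ∨ δ = -1) ∧
      unitSquare p θ ∩ {q : ℝ × ℝ | 0 ≤ ε * (q.1 - p.1) ∧ 0 ≤ δ * (q.2 - p.2)} ⊆
        Set.Icc (0 : ℝ) a ×ˢ Set.Icc (0 : ℝ) b := by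
  obtain ⟨ε, hε, hεa⟩ :=
    exists_sign_halfInterval_subset_Icc (r := √2 / 2) (by linarith) hp.1
  obtain ⟨δ, hδ, hδb⟩ :=
    exists_sign_halfInterval_subset_Icc (r := √2 / 2) (by linarith) hp.2
  refine ⟨ε, δ, hε, hδ, ?_⟩
  rintro q ⟨hq, hq1, hq2⟩
  exact ⟨hεa q.1 (abs_fst_sub_le_of_mem_unitSquare hq) hq1,
    hδb q.2 (abs_snd_sub_le_of_mem_unitSquare hq) hq2⟩
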